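/- Every two-qubit orthogonal product basis is, up to local unitaries and swap of the two qubits, of the form {|0⟩⊗|b⟩, |0⟩⊗|b'⟩, |1⟩⊗|c⟩, |1⟩⊗|c'⟩}, where {|b⟩,|b'⟩} and {|c⟩,|c'⟩} are orthonormal bases of ℂ². -/

import Mathlib

open scoped ComplexInnerProductSpace Matrix
noncomputable section
/-- A qubit state space `ℂ²`. -/
abbrev Qubit := EuclideanSpace ℂ (Fin 2)
/-- The standard basis vector `|0⟩`. -/
def e0 : Qubit := EuclideanSpace.single 0 1
/-- The standard basis vector `|1⟩`. -/
def e1 : Qubit := EuclideanSpace.single 1 1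
/-- `OB a a'` means `{a, a'}` is an orthonormal basis of `ℂ²`. -/
def OB (a a' : Qubit) : Prop := ⟪a, a⟫ = 1 ∧ ⟪a', a'⟫ = 1 ∧ ⟪a, a'⟫ = 0
/-- The two-qubit product state `a ⊗ b`. -/
def prod2 (a b : Qubit) : EuclideanSpace ℂ (Fin 2 × Fin 2) := WithLp.toLp 2 (fun p : Fin 2 × Fin 2 => a p.1 * b p.2)
/-- The three-qubit product state `a ⊗ b ⊗ c`. -/
def prod3 (a b c : Qubit) : EuclideanSpace ℂ (Fin 2 × Fin 2 × Fin 2) :=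
  WithLp.toLp 2 (fun p : Fin 2 × Fin 2 × Fin 2 => a p.1 * b p.2.1 * c p.2.2)
/-- The four-qubit product state `a ⊗ b ⊗ c ⊗ d`. -/
def prod4 (a b c d : Qubit) : EuclideanSpace ℂ (Fin 2 × Fin 2 × Fin 2 × Fin 2) :=
  WithLp.toLp 2 (fun p : Fin 2 × Fin 2 × Fin 2 × Fin 2 => a p.1 * b p.2.1 * c p.2.2.1 * d p.2.2.2)
/-- Apply a `2 × 2` matrix to a qubit state. -/
def appM (A : Matrix (Fin 2) (Fin 2) ℂ) (v : Qubit) : Qubit := WithLp.toLp 2 (fun i => ∑ j, A i j * v j)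

/-- Apply the local unitary `U ⊗ V` to a two-qubit state. -/
def act2 (U V : Matrix (Fin 2) (Fin 2) ℂ) (w : EuclideanSpace ℂ (Fin 2 × Fin 2)) :
    EuclideanSpace ℂ (Fin 2 × Fin 2) :=
  WithLp.toLp 2 (fun p : Fin 2 × Fin 2 => ∑ q : Fin 2 × Fin 2, U p.1 q.1 * V p.2 q.2 * w q)
/-- Possibly swap the two qubits. -/
def maybeSwap (s : Bool) (w : EuclideanSpace ℂ (Fin 2 × Fin 2)) :
    EuclideanSpace ℂ (Fin 2 × Fin 2) :=
  if s then WithLp.toLp 2 (fun p : Fin 2 × Fin 2 => w (p.2, p.1)) else w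
/-- The standard-form two-qubit OPB `{|0⟩⊗|b⟩, |0⟩⊗|b'⟩, |1⟩⊗|c⟩, |1⟩⊗|c'⟩}`. -/
def stdOPB (b b' c c' : Qubit) : Fin 4 → EuclideanSpace ℂ (Fin 2 × Fin 2) :=
  ![prod2 e0 b, prod2 e0 b', prod2 e1 c, prod2 e1 c']

/-!
Write `S j = u j ⊗ v j`, so that for `j ≠ k` either `⟪u j, u k⟫ = 0` or `⟪v j, v k⟫ = 0`.
By pigeonhole one factor of `S 0`, say `u 0`, is orthogonal to the same factor of two other
states `S 2`, `S 3`. Since `(u 0)ᗮ` is a line in `ℂ²`, `u 3 ∥ u 2`, which forces `v 2 ⊥ v 3`;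
then `u 1 ⊥ u 2` (otherwise `v 1, v 2, v 3` would be pairwise orthogonal in `ℂ²`), so
`u 1 ∥ u 0` and `v 0 ⊥ v 1`. The unitary taking the unit vectors along `u 0`, `u 2` to
`|0⟩`, `|1⟩` now puts the basis in standard form.
-/

open Module Submodule NormedSpace ComplexConjugate
open scoped InnerProductSpace

section InnerProductSpace

variable {𝕜 E : Type*} [RCLike 𝕜] [NormedAddCommGroup E] [InnerProductSpace 𝕜 E]

theorem inner_eq_zero_iff_of_eq_smul {v w : E} {c : 𝕜} (hw : w ≠ 0) (h : w = c • v) (z : E) :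
    ⟪z, w⟫_𝕜 = 0 ↔ ⟪z, v⟫_𝕜 = 0 := by
  subst h
  simp [inner_smul_right, left_ne_zero_of_smul hw]

variable [Fact (finrank 𝕜 E = 2)]

theorem exists_eq_smul_of_inner_eq_zero {u v w : E} (hu : u ≠ 0) (hv : v ≠ 0)
    (huv : ⟪u, v⟫_𝕜 = 0) (huw : ⟪u, w⟫_𝕜 = 0) : ∃ c : 𝕜, w = c • v := by
  obtain ⟨c, hc⟩ :=
    mem_span_singleton.mp (mem_span_singleton_of_inner_eq_zero_of_inner_eq_zero hu hv huw huv)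
  exact ⟨c, hc.symm⟩

theorem eq_zero_of_inner_eq_zero_of_inner_eq_zero {u v w : E} (hu : u ≠ 0) (hv : v ≠ 0)
    (huv : ⟪u, v⟫_𝕜 = 0) (huw : ⟪u, w⟫_𝕜 = 0) (hvw : ⟪v, w⟫_𝕜 = 0) : w = 0 := by
  obtain ⟨c, rfl⟩ := exists_eq_smul_of_inner_eq_zero hu hv huv huw
  rw [← inner_self_eq_zero (𝕜 := 𝕜), inner_smul_left, hvw, mul_zero]

theorem orthogonal_product_family_pairing {x y : Fin 4 → E} (hx : ∀ j, x j ≠ 0)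
    (hy : ∀ j, y j ≠ 0) (ho : ∀ j k, j ≠ k → ⟪x j, x k⟫_𝕜 = 0 ∨ ⟪y j, y k⟫_𝕜 = 0)
    (h02 : ⟪y 0, y 2⟫_𝕜 = 0) (h03 : ⟪y 0, y 3⟫_𝕜 = 0) :
    (∃ d : 𝕜, y 1 = d • y 0) ∧ (∃ c : 𝕜, y 3 = c • y 2) ∧
      ⟪x 0, x 1⟫_𝕜 = 0 ∧ ⟪x 2, x 3⟫_𝕜 = 0 := by
  obtain ⟨c, hc⟩ := exists_eq_smul_of_inner_eq_zero (hy 0) (hy 2) h02 h03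
  have h3 := inner_eq_zero_iff_of_eq_smul (hy 3) hc
  have hx23 : ⟪x 2, x 3⟫_𝕜 = 0 :=
    (ho 2 3 (by decide)).resolve_right ((h3 _).not.mpr (inner_self_ne_zero.mpr (hy 2)))
  have h12 : ⟪y 1, y 2⟫_𝕜 = 0 := by
    by_contra h
    have hx12 := (ho 1 2 (by decide)).resolve_right h
    have hx13 := (ho 1 3 (by decide)).resolve_right ((h3 _).not.mpr h)
    exact hx 1 (eq_zero_of_inner_eq_zero_of_inner_eq_zero (hx 2) (hx 3) hx23
      (inner_eq_zero_symm.mp hx12) (inner_eq_zero_symm.mp hx13))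
  obtain ⟨d, hd⟩ := exists_eq_smul_of_inner_eq_zero (hy 2) (hy 0)
    (inner_eq_zero_symm.mp h02) (inner_eq_zero_symm.mp h12)
  have hx01 : ⟪x 0, x 1⟫_𝕜 = 0 := (ho 0 1 (by decide)).resolve_right
    ((inner_eq_zero_iff_of_eq_smul (hy 1) hd _).not.mpr (inner_self_ne_zero.mpr (hy 0)))
  exact ⟨⟨d, hd⟩, ⟨c, hc⟩, hx01, hx23⟩

end InnerProductSpace

theorem Fin.exists_perm_of_forall_ne_zero_or {P Q : Fin 4 → Prop}
    (h : ∀ k, k ≠ 0 → P k ∨ Q k) :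
    ∃ σ : Equiv.Perm (Fin 4), σ 0 = 0 ∧ (P (σ 2) ∧ P (σ 3) ∨ Q (σ 2) ∧ Q (σ 3)) := by
  rcases h 1 (by decide) with h1 | h1 <;> rcases h 2 (by decide) with h2 | h2 <;>
    rcases h 3 (by decide) with h3 | h3
  all_goals first
    | exact ⟨1, rfl, .inl ⟨h2, h3⟩⟩ | exact ⟨1, rfl, .inr ⟨h2, h3⟩⟩
    | exact ⟨Equiv.swap 1 2, rfl, .inl ⟨h1, h3⟩⟩ | exact ⟨Equiv.swap 1 2, rfl, .inr ⟨h1, h3⟩⟩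
    | exact ⟨Equiv.swap 1 3, rfl, .inl ⟨h2, h1⟩⟩ | exact ⟨Equiv.swap 1 3, rfl, .inr ⟨h2, h1⟩⟩

instance : Fact (finrank ℂ Qubit = 2) := ⟨finrank_euclideanSpace_fin⟩

theorem inner_prod2 (u v u' v' : Qubit) : ⟪prod2 u v, prod2 u' v'⟫ = ⟪u, u'⟫ * ⟪v, v'⟫ := by
  simp [PiLp.inner_apply, prod2, Fintype.sum_prod_type, Fin.sum_univ_two]
  ring

theorem prod2_smul_left (a : ℂ) (u v : Qubit) : prod2 (a • u) v = a • prod2 u v := by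
  ext p
  simp [prod2, mul_assoc]

theorem prod2_smul_right (a : ℂ) (u v : Qubit) : prod2 u (a • v) = a • prod2 u v := by
  ext p
  simp [prod2, mul_left_comm]

theorem appM_smul (A : Matrix (Fin 2) (Fin 2) ℂ) (a : ℂ) (v : Qubit) :
    appM A (a • v) = a • appM A v := by
  ext i
  simp [appM, Fin.sum_univ_two]
  ring

theorem appM_one (v : Qubit) : appM 1 v = v := by
  ext i
  simp [appM, Matrix.one_apply]

theorem act2_prod2 (U V : Matrix (Fin 2) (Fin 2) ℂ) (u v : Qubit) :
    act2 U V (prod2 u v) = prod2 (appM U u) (appM V v) := by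
  ext p
  simp [act2, prod2, appM, Fintype.sum_prod_type, Fin.sum_univ_two]
  ring

theorem maybeSwap_true_prod2 (u v : Qubit) : maybeSwap true (prod2 u v) = prod2 v u := by
  ext p
  simp [maybeSwap, prod2, mul_comm]

theorem eq_norm_smul_normalize (x : Qubit) : x = (‖x‖ : ℂ) • normalize x := by
  rw [Complex.coe_smul, norm_smul_normalize]

theorem eq_smul_normalize_of_eq_smul {v w : Qubit} {d : ℂ} (h : w = d • v) :
    w = (d * ‖v‖) • normalize v := by
  rw [h, mul_smul, ← eq_norm_smul_normalize]

theorem OB_normalize {x y : Qubit} (hx : x ≠ 0) (hy : y ≠ 0) (hxy : ⟪x, y⟫ = 0) :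
    OB (normalize x) (normalize y) := by
  have hn : ∀ z : Qubit, z ≠ 0 → ⟪normalize z, normalize z⟫ = 1 := fun z hz => by
    rw [inner_self_eq_norm_sq_to_K, norm_normalize_eq_one_iff.mpr hz]
    simp
  refine ⟨hn x hx, hn y hy, ?_⟩
  simp only [NormedSpace.normalize, ← Complex.coe_smul, inner_smul_left, inner_smul_right, hxy,
    mul_zero]

def braMatrix (f g : Qubit) : Matrix (Fin 2) (Fin 2) ℂ := Matrix.of fun i j => conj (![f, g] i j)

theorem appM_braMatrix_apply (f g v : Qubit) (i : Fin 2) :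
    appM (braMatrix f g) v i = ⟪![f, g] i, v⟫ := by
  simp [appM, braMatrix, PiLp.inner_apply, mul_comm]

theorem braMatrix_mul_conjTranspose_apply (f g : Qubit) (i k : Fin 2) :
    (braMatrix f g * (braMatrix f g)ᴴ) i k = ⟪![f, g] i, ![f, g] k⟫ := by
  simp [braMatrix, Matrix.mul_apply, PiLp.inner_apply, mul_comm]

theorem braMatrix_unitary {f g : Qubit} (h : OB f g) : (braMatrix f g)ᴴ * braMatrix f g = 1 := by
  obtain ⟨hf, hg, hfg⟩ := h
  rw [mul_eq_one_comm]
  ext i k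
  fin_cases i <;> fin_cases k <;>
    simp [braMatrix_mul_conjTranspose_apply, hf, hg, hfg, inner_eq_zero_symm.mp hfg,
      -inner_self_eq_norm_sq_to_K]

theorem appM_braMatrix_left {f g : Qubit} (h : OB f g) : appM (braMatrix f g) f = e0 := by
  ext i
  fin_cases i <;>
    simp [appM_braMatrix_apply, e0, h.1, inner_eq_zero_symm.mp h.2.2, -inner_self_eq_norm_sq_to_K]

theorem appM_braMatrix_right {f g : Qubit} (h : OB f g) : appM (braMatrix f g) g = e1 := by
  ext i
  fin_cases i <;> simp [appM_braMatrix_apply, e1, h.2.1, h.2.2, -inner_self_eq_norm_sq_to_K]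

theorem exists_unitary_prod2_eq_stdOPB_of_pairing {x y : Fin 4 → Qubit} (hx : ∀ j, x j ≠ 0)
    (hy : ∀ j, y j ≠ 0) (h02 : ⟪y 0, y 2⟫ = 0) {d c : ℂ} (hd : y 1 = d • y 0)
    (hc : y 3 = c • y 2) (hx01 : ⟪x 0, x 1⟫ = 0) (hx23 : ⟪x 2, x 3⟫ = 0) :
    ∃ M : Matrix (Fin 2) (Fin 2) ℂ, Mᴴ * M = 1 ∧
      ∃ b b' c c' : Qubit, OB b b' ∧ OB c c' ∧
        ∃ γ : Fin 4 → ℂ, (∀ j, γ j ≠ 0) ∧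
          ∀ j, prod2 (appM M (y j)) (x j) = γ j • stdOPB b b' c c' j := by
  set f := normalize (y 0)
  set g := normalize (y 2)
  have hfg : OB f g := OB_normalize (hy 0) (hy 2) h02
  have hyfg : ∀ j, ∃ a : ℂ, y j = a • ![f, f, g, g] j := by
    intro j
    fin_cases j
    · exact ⟨_, eq_norm_smul_normalize (y 0)⟩
    · exact ⟨_, eq_smul_normalize_of_eq_smul hd⟩
    · exact ⟨_, eq_norm_smul_normalize (y 2)⟩
    · exact ⟨_, eq_smul_normalize_of_eq_smul hc⟩
  have hM : ∀ j, appM (braMatrix f g) (![f, f, g, g] j) = ![e0, e0, e1, e1] j := by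
    intro j
    fin_cases j <;> simp [appM_braMatrix_left hfg, appM_braMatrix_right hfg]
  have hstd : ∀ j, ∃ γ : ℂ, γ ≠ 0 ∧ prod2 (appM (braMatrix f g) (y j)) (x j) =
      γ • stdOPB (normalize (x 0)) (normalize (x 1)) (normalize (x 2)) (normalize (x 3)) j := by
    intro j
    obtain ⟨a, ha⟩ := hyfg j
    refine ⟨a * ‖x j‖, mul_ne_zero (left_ne_zero_of_smul (ha ▸ hy j)) (by simpa using hx j), ?_⟩
    rw [ha, appM_smul, hM, prod2_smul_left, mul_smul]
    conv_lhs => rw [eq_norm_smul_normalize (x j), prod2_smul_right]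
    fin_cases j <;> rfl
  choose γ hγ hγstd using hstd
  exact ⟨braMatrix f g, braMatrix_unitary hfg, _, _, _, _, OB_normalize (hx 0) (hx 1) hx01,
    OB_normalize (hx 2) (hx 3) hx23, γ, hγ, hγstd⟩

theorem exists_unitary_prod2_eq_stdOPB {x y : Fin 4 → Qubit} (hx : ∀ j, x j ≠ 0)
    (hy : ∀ j, y j ≠ 0) (ho : ∀ j k, j ≠ k → ⟪x j, x k⟫ = 0 ∨ ⟪y j, y k⟫ = 0)
    (h02 : ⟪y 0, y 2⟫ = 0) (h03 : ⟪y 0, y 3⟫ = 0) :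
    ∃ M : Matrix (Fin 2) (Fin 2) ℂ, Mᴴ * M = 1 ∧
      ∃ b b' c c' : Qubit, OB b b' ∧ OB c c' ∧
        ∃ γ : Fin 4 → ℂ, (∀ j, γ j ≠ 0) ∧
          ∀ j, prod2 (appM M (y j)) (x j) = γ j • stdOPB b b' c c' j := by
  obtain ⟨⟨d, hd⟩, ⟨c, hc⟩, hx01, hx23⟩ := orthogonal_product_family_pairing hx hy ho h02 h03
  exact exists_unitary_prod2_eq_stdOPB_of_pairing hx hy h02 hd hc hx01 hx23

theorem two_qubit_OPB_standard_form_general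
    (S : Fin 4 → EuclideanSpace ℂ (Fin 2 × Fin 2))
    (hprod : ∀ j, ∃ u v : Qubit, u ≠ 0 ∧ v ≠ 0 ∧ S j = prod2 u v)
    (horth : ∀ j k, j ≠ k → ⟪S j, S k⟫ = 0) :
    ∃ U V : Matrix (Fin 2) (Fin 2) ℂ, Uᴴ * U = 1 ∧ Vᴴ * V = 1 ∧
      ∃ (sw : Bool) (b b' c c' : Qubit), OB b b' ∧ OB c c' ∧
        ∃ (π : Fin 4 ≃ Fin 4) (γ : Fin 4 → ℂ), (∀ j, γ j ≠ 0) ∧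
          ∀ j, maybeSwap sw (act2 U V (S j)) = γ j • stdOPB b b' c c' (π j) := by
  choose u v hu hv hS using hprod
  have hinn : ∀ j k, j ≠ k → ⟪u j, u k⟫ = 0 ∨ ⟪v j, v k⟫ = 0 := fun j k hjk => by
    simpa [hS, inner_prod2] using horth j k hjk
  obtain ⟨σ, hσ0, ⟨h2, h3⟩ | ⟨h2, h3⟩⟩ :=
    Fin.exists_perm_of_forall_ne_zero_or fun k hk => hinn 0 k hk.symm
  · obtain ⟨M, hM, b, b', c, c', hb, hc, γ, hγ, hstd⟩ :=
      exists_unitary_prod2_eq_stdOPB (x := v ∘ σ) (y := u ∘ σ) (fun _ => hv _) (fun _ => hu _)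
        (fun j k hjk => (hinn _ _ (σ.injective.ne hjk)).symm) (by simpa [hσ0] using h2)
        (by simpa [hσ0] using h3)
    refine ⟨M, 1, hM, by simp, false, b, b', c, c', hb, hc, σ.symm, γ ∘ σ.symm, fun _ => hγ _,
      fun j => ?_⟩
    simpa [maybeSwap, hS, act2_prod2, appM_one] using hstd (σ.symm j)
  · obtain ⟨M, hM, b, b', c, c', hb, hc, γ, hγ, hstd⟩ :=
      exists_unitary_prod2_eq_stdOPB (x := u ∘ σ) (y := v ∘ σ) (fun _ => hu _) (fun _ => hv _)
        (fun j k hjk => hinn _ _ (σ.injective.ne hjk)) (by simpa [hσ0] using h2)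
        (by simpa [hσ0] using h3)
    refine ⟨1, M, by simp, hM, true, b, b', c, c', hb, hc, σ.symm, γ ∘ σ.symm, fun _ => hγ _,
      fun j => ?_⟩
    simpa [maybeSwap_true_prod2, hS, act2_prod2, appM_one] using hstd (σ.symm j)

/-- Every two-qubit OPB is, up to local unitaries and a possible swap of
the two qubits (and relabeling / rescaling by nonzero scalars), of the standard form
`{|0⟩⊗|b⟩, |0⟩⊗|b'⟩, |1⟩⊗|c⟩, |1⟩⊗|c'⟩}` with `{b,b'}`, `{c,c'}` orthonormal bases. -/
theorem two_qubit_OPB_standard_form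
    (S : Fin 4 → EuclideanSpace ℂ (Fin 2 × Fin 2))
    (hprod : ∀ j, ∃ u v : Qubit, u ≠ 0 ∧ v ≠ 0 ∧ S j = prod2 u v)
    (horth : ∀ j k, j ≠ k → ⟪S j, S k⟫ = 0)
    (hspan : Submodule.span ℂ (Set.range S) = ⊤) :
    ∃ U V : Matrix (Fin 2) (Fin 2) ℂ, Uᴴ * U = 1 ∧ Vᴴ * V = 1 ∧
      ∃ (sw : Bool) (b b' c c' : Qubit), OB b b' ∧ OB c c' ∧
        ∃ (π : Fin 4 ≃ Fin 4) (γ : Fin 4 → ℂ), (∀ j, γ j ≠ 0) ∧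
          ∀ j, maybeSwap sw (act2 U V (S j)) = γ j • stdOPB b b' c c' (π j) :=
  two_qubit_OPB_standard_form_general S hprod horth
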